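/- Monotonicity of Belavkin–Staszewski relative entropy under an ampliated CP map in the finite-dimensional commuting-reference case: if Φ is a trace-preserving completely positive map on matrices and ω, φ are density matrices with φ positive definite such that Φ(φ) is positive definite, then Tr Φ(ω) log( Φ(ω)^{1/2} Φ(φ)⁻¹ Φ(ω)^{1/2} ) ≤ Tr ω log( ω^{1/2} φ⁻¹ ω^{1/2} ). -/

import Mathlib

open Matrix Kronecker
open scoped ComplexOrder

noncomputable section
open Classical

/-- Hermitian functional calculus, extended by junk value `0` to non-Hermitian matrices. -/
def matCFC {d : Type*} [Fintype d] [DecidableEq d] (f : ℝ → ℝ)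
    (A : Matrix d d ℂ) : Matrix d d ℂ :=
  if h : A.IsHermitian then h.cfc f else 0

/-- Matrix logarithm (spectral, with `Real.log 0 = 0` on the kernel). -/
def matLog {d : Type*} [Fintype d] [DecidableEq d] (A : Matrix d d ℂ) : Matrix d d ℂ :=
  matCFC Real.log A

/-- Moore–Penrose pseudoinverse of a Hermitian matrix (junk value `0` otherwise). -/
def matPinv {d : Type*} [Fintype d] [DecidableEq d] (A : Matrix d d ℂ) : Matrix d d ℂ :=
  matCFC (·⁻¹) A

/-- Positive square root of a positive semidefinite matrix (junk value `0` otherwise). -/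
def matSqrt {d : Type*} [Fintype d] [DecidableEq d] (A : Matrix d d ℂ) : Matrix d d ℂ :=
  if h : A.PosSemidef then h.1.cfc Real.sqrt else 0

/-- von Neumann entropy `-∑ λᵢ log λᵢ` (junk value `0` for non-Hermitian matrices). -/
def vN {d : Type*} [Fintype d] [DecidableEq d] (A : Matrix d d ℂ) : ℝ :=
  if h : A.IsHermitian then -∑ i, (h.eigenvalues i) * Real.log (h.eigenvalues i) else 0

/-- Belavkin–Staszewski relative entropy `Tr ω log(ω^{1/2} φ⁻ ω^{1/2})`. -/
def RBS {d : Type*} [Fintype d] [DecidableEq d] (ω φ : Matrix d d ℂ) : ℝ :=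
  ((ω * matLog (matSqrt ω * matPinv φ * matSqrt ω)).trace).re

/-- Partial trace over the second tensor factor. -/
def ptraceR {m n : Type*} [Fintype m] [Fintype n]
    (M : Matrix (m × n) (m × n) ℂ) : Matrix m m ℂ :=
  Matrix.of fun i j => ∑ k, M (i, k) (j, k)

/-- Partial trace over the first tensor factor. -/
def ptraceL {m n : Type*} [Fintype m] [Fintype n]
    (M : Matrix (m × n) (m × n) ℂ) : Matrix n n ℂ :=
  Matrix.of fun k l => ∑ i, M (i, k) (i, l)

/-!
With `X = σ^{-1/2} ρ σ^{-1/2}`, the quantities `Tr σ`, `Tr ρ`, `Tr σ (ρ + tσ)⁻¹ σ` and `RBS ρ σ`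
are the integrals of `1`, `x`, `1/(x + t)` and `x log x` against one finite measure
`∑ cᵢ δ_{λᵢ}` on `[0, ∞)` coming from the spectral decomposition of `X`. Since
`x log x = ∫₀^∞ (x/(1+t) - 1 + t/(x+t)) dt`, the entropy only depends on mass, mean and Stieltjes
transform of that measure, and is increasing in the latter.

For `A = ω + tφ`, the block matrix `[[A, φ], [φ, φ A⁻¹ φ]]` is positive; applying `Φ ⊗ id₂` and
taking a Schur complement gives `Φ(φ) Φ(A)⁻¹ Φ(φ) ≤ Φ(φ A⁻¹ φ)`. Taking traces, trace
preservation shows that `(Φ ω, Φ φ)` has the same mass and mean as `(ω, φ)` and a smaller Stieltjes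
transform.
-/

section MulLogIntegral

open MeasureTheory Set Filter Topology

def mulLogKernel (x t : ℝ) : ℝ := x * (x - 1) / ((1 + t) * (x + t))

lemma mulLogKernel_eq {x t : ℝ} (hx : 0 ≤ x) (ht : 0 < t) :
    mulLogKernel x t = x / (1 + t) - 1 + t / (x + t) := by
  have h1 : 1 + t ≠ 0 := by positivity
  have h2 : x + t ≠ 0 := by positivity
  rw [mulLogKernel]
  field_simp
  ring

lemma hasDerivAt_log_one_add_sub_log_add {x t : ℝ} (h1 : 0 < 1 + t) (hx : 0 < x + t) :
    HasDerivAt (fun s => Real.log (1 + s) - Real.log (x + s))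
      ((x - 1) / ((1 + t) * (x + t))) t := by
  have d1 := ((hasDerivAt_id' t).const_add 1).log h1.ne'
  have d2 := ((hasDerivAt_id' t).const_add x).log hx.ne'
  refine (d1.sub d2).congr_deriv ?_
  field_simp
  ring

lemma tendsto_log_one_add_sub_log_add (x : ℝ) :
    Tendsto (fun t => Real.log (1 + t) - Real.log (x + t)) atTop (𝓝 0) := by
  have hratio : Tendsto (fun t => (1 - x) / (x + t) + 1) atTop (𝓝 1) := by
    simpa using
      (tendsto_const_nhds.div_atTop (tendsto_atTop_add_const_left _ x tendsto_id)).add_const 1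
  have hlog := ((Real.continuousAt_log one_ne_zero).tendsto.comp hratio)
  rw [Real.log_one] at hlog
  refine hlog.congr' ?_
  filter_upwards [eventually_gt_atTop (max 0 (-x))] with t ht
  have h1 : 0 < 1 + t := by linarith [le_max_left 0 (-x)]
  have hx : 0 < x + t := by linarith [le_max_right 0 (-x)]
  rw [Function.comp_apply, ← Real.log_div h1.ne' hx.ne']
  congr 1
  field_simp
  ring

lemma integrableOn_and_integral_one_div_one_add_mul_add {x : ℝ} (hx : 0 < x) (hx1 : x ≠ 1) :
    IntegrableOn (fun t => 1 / ((1 + t) * (x + t))) (Ioi 0) ∧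
      ∫ t in Ioi (0 : ℝ), 1 / ((1 + t) * (x + t)) = Real.log x / (x - 1) := by
  set G : ℝ → ℝ := fun t => (Real.log (1 + t) - Real.log (x + t)) / (x - 1)
  have hderiv : ∀ t ∈ Ici (0 : ℝ), HasDerivAt G (1 / ((1 + t) * (x + t))) t := by
    intro t (ht : 0 ≤ t)
    have h1 : 0 < 1 + t := by linarith
    have hxt : 0 < x + t := by linarith
    refine ((hasDerivAt_log_one_add_sub_log_add h1 hxt).div_const (x - 1)).congr_deriv ?_
    field_simp [sub_ne_zero.mpr hx1]
  have hpos : ∀ t ∈ Ioi (0 : ℝ), 0 ≤ 1 / ((1 + t) * (x + t)) := fun t (ht : 0 < t) => by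
    positivity
  have htend : Tendsto G atTop (𝓝 0) := by
    simpa [G] using (tendsto_log_one_add_sub_log_add x).div_const (x - 1)
  refine ⟨integrableOn_Ioi_deriv_of_nonneg' hderiv hpos htend, ?_⟩
  rw [integral_Ioi_of_hasDerivAt_of_nonneg' hderiv hpos htend]
  simp [G]
  ring

lemma mulLogKernel_eq_mul (x t : ℝ) :
    mulLogKernel x t = x * (x - 1) * (1 / ((1 + t) * (x + t))) := by
  rw [mulLogKernel, mul_one_div]

lemma integrableOn_mulLogKernel {x : ℝ} (hx : 0 ≤ x) : IntegrableOn (mulLogKernel x) (Ioi 0) := by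
  simp_rw [funext (mulLogKernel_eq_mul x)]
  rcases hx.eq_or_lt with rfl | hx
  · simp
  rcases eq_or_ne x 1 with rfl | hx1
  · simp
  exact (integrableOn_and_integral_one_div_one_add_mul_add hx hx1).1.const_mul _

lemma integral_mulLogKernel {x : ℝ} (hx : 0 ≤ x) :
    ∫ t in Ioi (0 : ℝ), mulLogKernel x t = x * Real.log x := by
  simp_rw [mulLogKernel_eq_mul x, integral_const_mul]
  rcases hx.eq_or_lt with rfl | hx
  · simp
  rcases eq_or_ne x 1 with rfl | hx1
  · simp
  rw [(integrableOn_and_integral_one_div_one_add_mul_add hx hx1).2]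
  field_simp [sub_ne_zero.mpr hx1]

variable {ι κ : Type*} [Fintype ι] [Fintype κ]

lemma sum_mul_mulLogKernel (c lam : ι → ℝ) (hlam : ∀ i, 0 ≤ lam i) {t : ℝ} (ht : 0 < t) :
    ∑ i, c i * mulLogKernel (lam i) t
      = (∑ i, c i * lam i) / (1 + t) - ∑ i, c i + t * ∑ i, c i / (lam i + t) := by
  have h1 : 1 + t ≠ 0 := by positivity
  simp_rw [mulLogKernel_eq (hlam _) ht, Finset.sum_div, Finset.mul_sum, ← Finset.sum_sub_distrib,
    ← Finset.sum_add_distrib]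
  refine Finset.sum_congr rfl fun i _ => ?_
  have h2 : lam i + t ≠ 0 := by linarith [hlam i]
  field_simp

lemma integrableOn_sum_mul_mulLogKernel (c lam : ι → ℝ) (hlam : ∀ i, 0 ≤ lam i) :
    IntegrableOn (fun t => ∑ i, c i * mulLogKernel (lam i) t) (Ioi 0) :=
  integrable_finsetSum _ fun i _ => (integrableOn_mulLogKernel (hlam i)).const_mul (c i)

lemma integral_sum_mul_mulLogKernel (c lam : ι → ℝ) (hlam : ∀ i, 0 ≤ lam i) :
    ∫ t in Ioi (0 : ℝ), ∑ i, c i * mulLogKernel (lam i) t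
      = ∑ i, c i * (lam i * Real.log (lam i)) := by
  rw [integral_finsetSum _ fun i _ => (integrableOn_mulLogKernel (hlam i)).const_mul (c i)]
  simp_rw [integral_const_mul, integral_mulLogKernel (hlam _)]

/-- `x log x` is, up to an affine function, a positive mixture of the maps `x ↦ t / (x + t)`. -/
theorem sum_mul_mul_log_le_of_stieltjes_le (c lam : ι → ℝ) (d mu : κ → ℝ)
    (hlam : ∀ i, 0 ≤ lam i) (hmu : ∀ j, 0 ≤ mu j)
    (hsum : ∑ j, d j = ∑ i, c i) (hmean : ∑ j, d j * mu j = ∑ i, c i * lam i)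
    (hstieltjes : ∀ t : ℝ, 0 < t → ∑ j, d j / (mu j + t) ≤ ∑ i, c i / (lam i + t)) :
    ∑ j, d j * (mu j * Real.log (mu j)) ≤ ∑ i, c i * (lam i * Real.log (lam i)) := by
  rw [← integral_sum_mul_mulLogKernel c lam hlam, ← integral_sum_mul_mulLogKernel d mu hmu]
  refine setIntegral_mono_on (integrableOn_sum_mul_mulLogKernel d mu hmu)
    (integrableOn_sum_mul_mulLogKernel c lam hlam) measurableSet_Ioi fun t (ht : 0 < t) => ?_
  rw [sum_mul_mulLogKernel c lam hlam ht, sum_mul_mulLogKernel d mu hmu ht, hsum, hmean]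
  have := mul_le_mul_of_nonneg_left (hstieltjes t ht) ht.le
  linarith

end MulLogIntegral

section FunctionalCalculus

open Polynomial

lemma SemiconjBy.aeval {R A : Type*} [CommSemiring R] [Semiring A] [Algebra R A] {a b c : A}
    (h : SemiconjBy a b c) (p : R[X]) : SemiconjBy a (aeval b p) (aeval c p) := by
  induction p using Polynomial.induction_on' with
  | add p q hp hq => simpa only [map_add] using hp.add_right hq
  | monomial n r =>
    simpa only [aeval_monomial] using
      SemiconjBy.mul_right (Algebra.commute_algebraMap_right r a) (h.pow_right n)

variable {d : Type*} [Fintype d] [DecidableEq d]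

lemma continuousOn_spectrum (f : ℝ → ℝ) (A : Matrix d d ℂ) : ContinuousOn f (spectrum ℝ A) :=
  A.finite_real_spectrum.continuousOn f

/-- `cfc f` agrees with a polynomial on the (finite) spectra of both matrices at once. -/
lemma SemiconjBy.cfc_of_isHermitian {a b c : Matrix d d ℂ} (h : SemiconjBy a b c)
    (hb : b.IsHermitian) (hc : c.IsHermitian) (f : ℝ → ℝ) : SemiconjBy a (cfc f b) (cfc f c) := by
  set s := (b.finite_real_spectrum.union c.finite_real_spectrum).toFinset
  set p := Lagrange.interpolate s id f
  have hp : ∀ x ∈ s, p.eval x = f x := fun x hx =>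
    Lagrange.eval_interpolate_at_node f Function.injective_id.injOn hx
  have hb' : cfc f b = Polynomial.aeval b p := by
    rw [← cfc_polynomial p b hb]
    exact cfc_congr fun x hx => (hp x (by simp [s, hx])).symm
  have hc' : cfc f c = Polynomial.aeval c p := by
    rw [← cfc_polynomial p c hc]
    exact cfc_congr fun x hx => (hp x (by simp [s, hx])).symm
  rw [hb', hc']
  exact h.aeval p

lemma cfc_inv_add_const {X : Matrix d d ℂ} (hX : X.PosSemidef) {t : ℝ} (ht : 0 < t) :
    cfc (fun x : ℝ => (x + t)⁻¹) X = (X + t • 1)⁻¹ := by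
  have hne : ∀ x ∈ spectrum ℝ X, x + t ≠ 0 := fun x hx => by
    have : 0 ≤ x := by
      rw [hX.1.spectrum_real_eq_range_eigenvalues] at hx
      obtain ⟨i, rfl⟩ := hx
      exact hX.eigenvalues_nonneg i
    positivity
  refine (cfc_inv (fun x => x + t) X hne (continuousOn_spectrum _ _) hX.1.isSelfAdjoint).trans ?_
  rw [cfc_add_const t (fun x => x) X (continuousOn_spectrum _ _) hX.1.isSelfAdjoint,
    cfc_id' ℝ X hX.1.isSelfAdjoint, Matrix.nonsing_inv_eq_ringInverse, Algebra.algebraMap_eq_smul_one]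

lemma exists_re_trace_mul_cfc_eq_sum (P : Matrix d d ℂ) {X : Matrix d d ℂ} (hX : X.PosSemidef) :
    ∃ c lam : d → ℝ, (∀ i, 0 ≤ lam i) ∧
      ∀ f : ℝ → ℝ, ((P * cfc f X).trace).re = ∑ i, c i * f (lam i) := by
  set U : Matrix d d ℂ := ↑hX.1.eigenvectorUnitary
  refine ⟨fun i => ((star U * P * U) i i).re, hX.1.eigenvalues, hX.eigenvalues_nonneg,
    fun f => ?_⟩
  rw [hX.1.cfc_eq, IsHermitian.cfc, Unitary.conjStarAlgAut_apply, ← mul_assoc,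
    Matrix.trace_mul_cycle, ← mul_assoc, Matrix.trace, Complex.re_sum]
  refine Finset.sum_congr rfl fun i _ => ?_
  simp [U, Matrix.mul_diagonal, mul_comm]

lemma matCFC_eq_cfc {A : Matrix d d ℂ} (hA : A.IsHermitian) (f : ℝ → ℝ) :
    matCFC f A = cfc f A := by
  rw [matCFC, dif_pos hA, hA.cfc_eq]

lemma matPinv_eq_inv {σ : Matrix d d ℂ} (hσ : σ.PosDef) : matPinv σ = σ⁻¹ := by
  rw [matPinv, matCFC_eq_cfc hσ.1, cfc_ringInverse_id (R := ℝ) σ hσ.isUnit hσ.1.isSelfAdjoint,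
    Matrix.nonsing_inv_eq_ringInverse]

open scoped MatrixOrder in
lemma matSqrt_eq_sqrt {ρ : Matrix d d ℂ} (hρ : ρ.PosSemidef) : matSqrt ρ = CFC.sqrt ρ := by
  rw [matSqrt, dif_pos hρ, ← hρ.1.cfc_eq, CFC.sqrt_eq_real_sqrt ρ hρ.nonneg, cfcₙ_eq_cfc]

lemma trace_mul_cfc_mul_conjTranspose_mul_self (σ A : Matrix d d ℂ) (f : ℝ → ℝ) :
    (σ * cfc (fun x => x * f x) (Aᴴ * A)).trace = (A * σ * Aᴴ * cfc f (A * Aᴴ)).trace := by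
  have hAA := (posSemidef_conjTranspose_mul_self A).1
  have hflip : A * cfc f (Aᴴ * A) = cfc f (A * Aᴴ) * A :=
    SemiconjBy.cfc_of_isHermitian (mul_assoc A Aᴴ A).symm hAA
      (posSemidef_self_mul_conjTranspose A).1 f
  rw [cfc_mul _ _ _ (continuousOn_spectrum _ _) (continuousOn_spectrum _ _),
    cfc_id' ℝ _ hAA.isSelfAdjoint, mul_assoc Aᴴ, hflip]
  simp only [← mul_assoc]
  rw [Matrix.trace_mul_cycle _ _ A, mul_assoc A σ]

end FunctionalCalculus

section BelavkinStaszewski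

variable {d : Type*} [Fintype d] [DecidableEq d]

open scoped MatrixOrder in
/-- With `A = ρ^{1/2} σ^{-1/2}` one has `Aᴴ A = σ^{-1/2} ρ σ^{-1/2}`, `A Aᴴ = ρ^{1/2} σ⁻¹ ρ^{1/2}`
and `A σ Aᴴ = ρ`; the weights are the diagonal of `σ` in an eigenbasis of `Aᴴ A`. -/
theorem exists_spectral_weights_RBS {ρ σ : Matrix d d ℂ} (hρ : ρ.PosSemidef) (hσ : σ.PosDef) :
    ∃ c lam : d → ℝ, (∀ i, 0 ≤ lam i) ∧ ∑ i, c i = σ.trace.re ∧ ∑ i, c i * lam i = ρ.trace.re ∧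
      (∀ t : ℝ, 0 < t → ∑ i, c i / (lam i + t) = (σ * (ρ + t • σ)⁻¹ * σ).trace.re) ∧
      RBS ρ σ = ∑ i, c i * (lam i * Real.log (lam i)) := by
  set S := CFC.sqrt σ
  set R := CFC.sqrt ρ
  have hSS : S * S = σ := CFC.sqrt_mul_sqrt_self σ hσ.posSemidef.nonneg
  have hRR : R * R = ρ := CFC.sqrt_mul_sqrt_self ρ hρ.nonneg
  have hSdet : IsUnit S.det :=
    (isUnit_iff_isUnit_det S).1 ((CFC.isUnit_sqrt_iff σ hσ.posSemidef.nonneg).2 hσ.isUnit)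
  have hSinv : (S⁻¹)ᴴ = S⁻¹ := by
    rw [conjTranspose_nonsing_inv, (CFC.sqrt_nonneg σ).posSemidef.1]
  have hR : Rᴴ = R := (CFC.sqrt_nonneg ρ).posSemidef.1
  set A := R * S⁻¹
  have hAσA : A * σ * Aᴴ = ρ := by
    rw [conjTranspose_mul, hSinv, hR, ← hSS, ← hRR]
    simp only [A, mul_assoc, nonsing_inv_mul_cancel_left _ _ hSdet,
      mul_nonsing_inv_cancel_left _ _ hSdet]
  have hAA : A * Aᴴ = matSqrt ρ * matPinv σ * matSqrt ρ := by
    rw [matSqrt_eq_sqrt hρ, matPinv_eq_inv hσ, ← hSS, Matrix.mul_inv_rev, conjTranspose_mul,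
      hSinv, hR]
    simp only [A, mul_assoc]
    rfl
  have hres : ∀ t : ℝ, Aᴴ * A + t • 1 = S⁻¹ * (ρ + t • σ) * S⁻¹ := fun t => by
    rw [conjTranspose_mul, hSinv, hR, ← hSS, ← hRR]
    simp only [A, mul_add, add_mul, mul_smul_comm, smul_mul_assoc, mul_assoc,
      nonsing_inv_mul_cancel_left _ _ hSdet, mul_nonsing_inv _ hSdet]
  have hX := posSemidef_conjTranspose_mul_self A
  obtain ⟨c, lam, hlam, hcfc⟩ := exists_re_trace_mul_cfc_eq_sum σ hX
  refine ⟨c, lam, hlam, ?_, ?_, fun t ht => ?_, ?_⟩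
  · simpa [cfc_const_one ℝ _ hX.1.isSelfAdjoint] using (hcfc fun _ => 1).symm
  · have := hcfc fun x => x * 1
    rw [trace_mul_cfc_mul_conjTranspose_mul_self, hAσA,
      cfc_const_one ℝ _ (posSemidef_self_mul_conjTranspose A).1.isSelfAdjoint, mul_one] at this
    simpa using this.symm
  · have := hcfc fun x => (x + t)⁻¹
    rw [cfc_inv_add_const hX ht, hres] at this
    set M := ρ + t • σ
    rw [Matrix.mul_inv_rev, Matrix.mul_inv_rev, nonsing_inv_nonsing_inv _ hSdet, ← hSS] at this
    simp_rw [div_eq_mul_inv, ← this, ← hSS]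
    simp only [mul_assoc]
    rw [Matrix.trace_mul_comm S]
    simp only [mul_assoc]
  · have := hcfc fun x => x * Real.log x
    rw [trace_mul_cfc_mul_conjTranspose_mul_self, hAσA, hAA] at this
    rw [RBS, matLog, matCFC_eq_cfc (hAA ▸ (posSemidef_self_mul_conjTranspose A).1), this]

theorem RBS_le_of_stieltjes_le {e : Type*} [Fintype e] [DecidableEq e]
    {ρ σ : Matrix d d ℂ} {ρ' σ' : Matrix e e ℂ} (hρ : ρ.PosSemidef) (hσ : σ.PosDef)
    (hρ' : ρ'.PosSemidef) (hσ' : σ'.PosDef) (hσσ' : σ'.trace = σ.trace)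
    (hρρ' : ρ'.trace = ρ.trace)
    (hstieltjes : ∀ t : ℝ, 0 < t →
      (σ' * (ρ' + t • σ')⁻¹ * σ').trace.re ≤ (σ * (ρ + t • σ)⁻¹ * σ).trace.re) :
    RBS ρ' σ' ≤ RBS ρ σ := by
  obtain ⟨c, lam, hlam, hc, hclam, hcres, hcRBS⟩ := exists_spectral_weights_RBS hρ hσ
  obtain ⟨c', lam', hlam', hc', hclam', hcres', hcRBS'⟩ := exists_spectral_weights_RBS hρ' hσ'
  rw [hcRBS, hcRBS']
  refine sum_mul_mul_log_le_of_stieltjes_le c lam c' lam' hlam hlam' (by rw [hc, hc', hσσ'])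
    (by rw [hclam, hclam', hρρ']) fun t ht => ?_
  rw [hcres t ht, hcres' t ht]
  exact hstieltjes t ht

end BelavkinStaszewski

/-- The ampliation `Φ ⊗ id_ι` on `ι × ι` block matrices with `d × d` blocks. -/
def ampliate {d e : Type*} (Φ : Matrix d d ℂ →ₗ[ℂ] Matrix e e ℂ) {ι : Type*}
    (B : Matrix (d × ι) (d × ι) ℂ) : Matrix (e × ι) (e × ι) ℂ :=
  Matrix.of fun p q => Φ (Matrix.of fun a b => B (a, p.2) (b, q.2)) p.1 q.1

lemma posSemidef_map_of_ampliate_one {d e : Type*} {Φ : Matrix d d ℂ →ₗ[ℂ] Matrix e e ℂ}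
    (hΦ : ∀ B : Matrix (d × Fin 1) (d × Fin 1) ℂ, B.PosSemidef → (ampliate Φ B).PosSemidef)
    {A : Matrix d d ℂ} (hA : A.PosSemidef) : (Φ A).PosSemidef :=
  (hΦ _ (hA.submatrix Prod.fst)).submatrix fun i => (i, 0)

section Ampliation

variable {d e : Type*} [Fintype d] [DecidableEq d] [Fintype e] [DecidableEq e]
  {Φ : Matrix d d ℂ →ₗ[ℂ] Matrix e e ℂ}

lemma posSemidef_map_conjTranspose_mul_inv_mul_sub
    (hΦ : ∀ B : Matrix (d × Fin 2) (d × Fin 2) ℂ, B.PosSemidef → (ampliate Φ B).PosSemidef)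
    {A : Matrix d d ℂ} (hA : A.PosDef) (hΦA : (Φ A).PosDef) (B : Matrix d d ℂ) :
    (Φ (Bᴴ * A⁻¹ * B) - (Φ B)ᴴ * (Φ A)⁻¹ * Φ B).PosSemidef := by
  have := hA.isUnit.invertible
  have := hΦA.isUnit.invertible
  set D := Bᴴ * A⁻¹ * B
  have hM : (fromBlocks A B Bᴴ D).PosSemidef :=
    (hA.fromBlocks₁₁ B D).2 (by simpa [D] using PosSemidef.zero)
  let toSum : d × Fin 2 → d ⊕ d := fun p => if p.2 = 0 then .inl p.1 else .inr p.1
  let ofSum : e ⊕ e → e × Fin 2 := Sum.elim (·, 0) (·, 1)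
  have hblocks : (ampliate Φ ((fromBlocks A B Bᴴ D).submatrix toSum toSum)).submatrix ofSum ofSum
      = fromBlocks (Φ A) (Φ B) (Φ Bᴴ) (Φ D) := by
    ext (i | i) (j | j) <;> simp [ampliate, toSum, ofSum] <;> rfl
  have hN : (fromBlocks (Φ A) (Φ B) (Φ Bᴴ) (Φ D)).PosSemidef :=
    hblocks ▸ (hΦ _ (hM.submatrix toSum)).submatrix ofSum
  rw [← (isHermitian_fromBlocks_iff.1 hN.1).2.1] at hN
  exact (hΦA.fromBlocks₁₁ _ _).1 hN

lemma re_trace_map_conjTranspose_mul_inv_mul_le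
    (hΦ : ∀ B : Matrix (d × Fin 2) (d × Fin 2) ℂ, B.PosSemidef → (ampliate Φ B).PosSemidef)
    (hTP : ∀ A, (Φ A).trace = A.trace)
    {A : Matrix d d ℂ} (hA : A.PosDef) (hΦA : (Φ A).PosDef) (B : Matrix d d ℂ) :
    ((Φ B)ᴴ * (Φ A)⁻¹ * Φ B).trace.re ≤ (Bᴴ * A⁻¹ * B).trace.re := by
  have := (posSemidef_map_conjTranspose_mul_inv_mul_sub hΦ hA hΦA B).trace_nonneg
  rw [trace_sub, hTP, Complex.le_def] at this
  simpa using this.1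

end Ampliation

theorem stmt15_general {n m : ℕ}
    (Φ : Matrix (Fin n) (Fin n) ℂ →ₗ[ℂ] Matrix (Fin m) (Fin m) ℂ)
    (hCP : ∀ (k : ℕ) (B : Matrix (Fin n × Fin k) (Fin n × Fin k) ℂ), B.PosSemidef →
      (Matrix.of fun p q : Fin m × Fin k =>
        Φ (Matrix.of fun a b => B (a, p.2) (b, q.2)) p.1 q.1).PosSemidef)
    (hTP : ∀ A, (Φ A).trace = A.trace)
    (ω φ : Matrix (Fin n) (Fin n) ℂ)
    (hω : ω.PosSemidef)
    (hφ : φ.PosDef) (hΦφ : (Φ φ).PosDef) :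
    RBS (Φ ω) (Φ φ) ≤ RBS ω φ := by
  have hΦω : (Φ ω).PosSemidef := posSemidef_map_of_ampliate_one (hCP 1) hω
  refine RBS_le_of_stieltjes_le hω hφ hΦω hΦφ (hTP φ) (hTP ω) fun t ht => ?_
  have hA : (ω + t • φ).PosDef := Matrix.PosDef.posSemidef_add hω (hφ.smul ht)
  have hΦA : (Φ (ω + t • φ)).PosDef := by
    rw [map_add, LinearMap.map_smul_of_tower]
    exact Matrix.PosDef.posSemidef_add hΦω (hΦφ.smul ht)
  have := re_trace_map_conjTranspose_mul_inv_mul_le (hCP 2) hTP hA hΦA φ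
  rwa [map_add, LinearMap.map_smul_of_tower, hφ.1, hΦφ.1] at this

theorem stmt15 {n m : ℕ}
    (Φ : Matrix (Fin n) (Fin n) ℂ →ₗ[ℂ] Matrix (Fin m) (Fin m) ℂ)
    (hCP : ∀ (k : ℕ) (B : Matrix (Fin n × Fin k) (Fin n × Fin k) ℂ), B.PosSemidef →
      (Matrix.of fun p q : Fin m × Fin k =>
        Φ (Matrix.of fun a b => B (a, p.2) (b, q.2)) p.1 q.1).PosSemidef)
    (hTP : ∀ A, (Φ A).trace = A.trace)
    (ω φ : Matrix (Fin n) (Fin n) ℂ)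
    (hω : ω.PosSemidef) (hωtr : ω.trace = 1)
    (hφ : φ.PosDef) (hφtr : φ.trace = 1) (hΦφ : (Φ φ).PosDef) :
    RBS (Φ ω) (Φ φ) ≤ RBS ω φ :=
  stmt15_general Φ hCP hTP ω φ hω hφ hΦφ

end
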